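/- Let β ∈ ℝ, γ > 0, and let μ, ν be compactly supported probability measures on ℝ with infinite support such that μ = Φ_{β,γ}[ν]. Then for every polynomial f ∈ ℝ[x], L_ν[ L_μ[f] ] − γ^{−1} (x − β) L_μ[f] = γ^{−1} ( ∫ f dμ − f ). -/

import Mathlib

/-!
`L_ρ` is the divided difference `f ↦ ∫ (f(x) - f(y)) / (x - y) dρ(y)`, so it kills constants and
obeys the product rule `L_ρ[x p] = x L_ρ[p] + ∫ p dρ`. After multiplying by `γ`, both sides of the
identity are linear in `f`, so it suffices to check it on `xⁿ`, by induction on `n`: the product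
rule applied to `L_μ[xⁿ⁺¹] = x L_μ[xⁿ] + m^μ_n` reduces the inductive step to
`m^μ_{n+1} = β m^μ_n + γ ∫ L_μ[xⁿ] dν`, which is the recursion defining `μ = Φ_{β,γ}[ν]`.
-/

open MeasureTheory Polynomial

/-- Moments of a measure on ℝ. -/
noncomputable def mom (ρ : Measure ℝ) (k : ℕ) : ℝ := ∫ x, x ^ k ∂ρ

/-- The operator `L_ρ` on polynomials, defined via the moment sequence `m` of `ρ`:
`L[x^n] = Σ_{k=0}^{n-1} m_{n-1-k} x^k`. -/
noncomputable def Lop (m : ℕ → ℝ) (f : Polynomial ℝ) : Polynomial ℝ :=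
  f.sum fun n a => C a * ∑ k ∈ Finset.range n, C (m (n - 1 - k)) * X ^ k

/-- A measure has compact support. -/
def CompactSupp (μ : Measure ℝ) : Prop := ∃ K : Set ℝ, IsCompact K ∧ μ Kᶜ = 0

/-- The (topological) support of a measure on ℝ. -/
def msupport (μ : Measure ℝ) : Set ℝ := {x | ∀ U ∈ nhds x, μ U ≠ 0}

/-- `JacobiShift β γ mν mμ` says (at the level of moment sequences) that `μ = Φ_{β,γ}[ν]`. -/
def JacobiShift (β γ : ℝ) (mν mμ : ℕ → ℝ) : Prop :=
  ∀ n : ℕ, 1 ≤ n →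
    mμ n = β * mμ (n - 1) + γ * ∑ i ∈ Finset.range (n - 1), mν i * mμ (n - 2 - i)

noncomputable def Lop.linearMap (m : ℕ → ℝ) : ℝ[X] →ₗ[ℝ] ℝ[X] :=
  lsum fun n => LinearMap.toSpanSingleton ℝ ℝ[X] (∑ k ∈ Finset.range n, C (m (n - 1 - k)) * X ^ k)

noncomputable def momentFunctional (m : ℕ → ℝ) : ℝ[X] →ₗ[ℝ] ℝ :=
  lsum fun n => LinearMap.toSpanSingleton ℝ ℝ (m n)

section Lop

variable (m : ℕ → ℝ)

theorem Lop.coe_linearMap : ⇑(Lop.linearMap m) = Lop m := by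
  ext1 f
  simp only [Lop.linearMap, Lop, lsum_apply, LinearMap.toSpanSingleton_apply, smul_eq_C_mul]

theorem Lop_add (p q : ℝ[X]) : Lop m (p + q) = Lop m p + Lop m q := by
  simp only [← Lop.coe_linearMap, map_add]

theorem Lop_smul (a : ℝ) (p : ℝ[X]) : Lop m (a • p) = a • Lop m p := by
  simp only [← Lop.coe_linearMap, map_smul]

theorem Lop_X_pow (n : ℕ) :
    Lop m (X ^ n) = ∑ k ∈ Finset.range n, C (m (n - 1 - k)) * X ^ k := by
  simp [Lop, X_pow_eq_monomial, sum_monomial_index]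

theorem Lop_C (a : ℝ) : Lop m (C a) = 0 := by
  simp [Lop, sum_C_index]

theorem Lop_X_pow_succ (n : ℕ) : Lop m (X ^ (n + 1)) = X * Lop m (X ^ n) + C (m n) := by
  rw [Lop_X_pow, Lop_X_pow, Finset.sum_range_succ', Finset.mul_sum]
  simp only [pow_succ, Nat.add_sub_cancel, Nat.sub_zero, pow_zero, mul_one]
  congr 1
  refine Finset.sum_congr rfl fun k hk => ?_
  rw [show n - (k + 1) = n - 1 - k by omega]
  ring

theorem momentFunctional_X_pow (n : ℕ) : momentFunctional m (X ^ n) = m n := by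
  simp [momentFunctional, X_pow_eq_monomial, sum_monomial_index]

theorem Lop_X_mul (p : ℝ[X]) : Lop m (X * p) = X * Lop m p + C (momentFunctional m p) := by
  induction p using Polynomial.induction_on' with
  | add p q hp hq => rw [mul_add, Lop_add, Lop_add, hp, hq, map_add, C_add]; ring
  | monomial n a =>
    rw [← smul_X_eq_monomial, mul_smul_comm, ← pow_succ', Lop_smul, Lop_smul, map_smul,
      Lop_X_pow_succ, momentFunctional_X_pow]
    simp only [smul_eq_C_mul, smul_eq_mul, C_mul]
    ring

end Lop

theorem JacobiShift.succ_eq {β γ : ℝ} {mν mμ : ℕ → ℝ} (h : JacobiShift β γ mν mμ) (n : ℕ) :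
    mμ (n + 1) = β * mμ n + γ * momentFunctional mν (Lop mμ (X ^ n)) := by
  rw [h (n + 1) (by omega), Lop_X_pow, map_sum]
  simp only [Nat.add_sub_cancel, ← smul_eq_C_mul, map_smul, momentFunctional_X_pow, smul_eq_mul]
  congr 2
  refine Finset.sum_congr rfl fun k _ => ?_
  rw [show n + 1 - 2 - k = n - 1 - k by omega, mul_comm]

theorem JacobiShift.Lop_Lop_X_pow {β γ : ℝ} {mν mμ : ℕ → ℝ} (h : JacobiShift β γ mν mμ)
    (h0 : mμ 0 = 1) (n : ℕ) :
    C γ * Lop mν (Lop mμ (X ^ n)) - (X - C β) * Lop mμ (X ^ n) = C (mμ n) - X ^ n := by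
  induction n with
  | zero => rw [pow_zero, ← C_1, Lop_C, h0]; simp [Lop]
  | succ n ih =>
    rw [Lop_X_pow_succ, Lop_add, Lop_X_mul, Lop_C, h.succ_eq, C_add, C_mul, C_mul]
    linear_combination X * ih

theorem JacobiShift.Lop_Lop {β γ : ℝ} {mν mμ : ℕ → ℝ} (h : JacobiShift β γ mν mμ)
    (h0 : mμ 0 = 1) (f : ℝ[X]) :
    C γ * Lop mν (Lop mμ f) - (X - C β) * Lop mμ f = C (momentFunctional mμ f) - f := by
  induction f using Polynomial.induction_on' with
  | add p q hp hq => rw [Lop_add, Lop_add, map_add, C_add]; linear_combination hp + hq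
  | monomial n a =>
    rw [← smul_X_eq_monomial, Lop_smul, Lop_smul, map_smul, momentFunctional_X_pow]
    simp only [smul_eq_C_mul, smul_eq_mul, C_mul]
    linear_combination C a * h.Lop_Lop_X_pow h0 n

theorem integrable_pow_of_compactSupp (μ : Measure ℝ) [IsFiniteMeasure μ] (h : CompactSupp μ)
    (n : ℕ) : Integrable (fun x => x ^ n) μ := by
  obtain ⟨K, hK, hK0⟩ := h
  obtain ⟨M, hM⟩ := hK.exists_bound_of_continuousOn (continuous_pow n).continuousOn
  refine (integrable_const M).mono' (continuous_pow n).aestronglyMeasurable ?_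
  filter_upwards [measure_eq_zero_iff_ae_notMem.mp hK0] with x hx
  exact hM x (not_not.mp hx)

theorem integral_eval_eq_momentFunctional (μ : Measure ℝ) [IsFiniteMeasure μ]
    (h : CompactSupp μ) (f : ℝ[X]) : ∫ x, f.eval x ∂μ = momentFunctional (mom μ) f := by
  simp_rw [eval_eq_sum, Polynomial.sum]
  rw [integral_finsetSum _ fun n _ => (integrable_pow_of_compactSupp μ h n).const_mul _]
  simp [momentFunctional, integral_const_mul, mom, Polynomial.sum]

theorem stmt15_general (μ ν : Measure ℝ) [IsProbabilityMeasure μ]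
    (hcsμ : CompactSupp μ)
    (β : ℝ) (γ : ℝ) (hγ : 0 < γ)
    (hshift : JacobiShift β γ (mom ν) (mom μ)) :
    ∀ f : Polynomial ℝ,
      Lop (mom ν) (Lop (mom μ) f) - C γ⁻¹ * (X - C β) * Lop (mom μ) f
        = C γ⁻¹ * (C (∫ x, f.eval x ∂μ) - f) := by
  intro f
  have hγ_inv : C γ⁻¹ * C γ = (1 : ℝ[X]) := by rw [← C_mul, inv_mul_cancel₀ hγ.ne', C_1]
  rw [integral_eval_eq_momentFunctional μ hcsμ,
    ← hshift.Lop_Lop (by simp [mom]) f]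
  linear_combination (-Lop (mom ν) (Lop (mom μ) f)) * hγ_inv

theorem stmt15 (μ ν : Measure ℝ) [IsProbabilityMeasure μ] [IsProbabilityMeasure ν]
    (hcsμ : CompactSupp μ) (hcsν : CompactSupp ν)
    (hinfμ : (msupport μ).Infinite) (hinfν : (msupport ν).Infinite)
    (β : ℝ) (γ : ℝ) (hγ : 0 < γ)
    (hshift : JacobiShift β γ (mom ν) (mom μ)) :
    ∀ f : Polynomial ℝ,
      Lop (mom ν) (Lop (mom μ) f) - C γ⁻¹ * (X - C β) * Lop (mom μ) f
        = C γ⁻¹ * (C (∫ x, f.eval x ∂μ) - f) :=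
  stmt15_general μ ν hcsμ β γ hγ hshift
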